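/- arXiv:2503.07581 — 3 statements merged into one kernel-verified Lean document; each statement's English description precedes it below -/
import Mathlib

section
/- The center of the group algebra F[B] contains exactly two primitive idempotents; equivalently, F[B] has exactly two blocks. -/
/-!
Write `B = T ⋉ U` with `T ≅ 𝔽_pˣ` the diagonal torus and `U ≅ 𝔽_p` the unipotent radical. The
coefficients of a central element `x ∈ F[B]` are constant on conjugacy classes, and conjugation
by `U` moves `d ∈ T` transitively along its coset `dU` as soon as `d² ≠ 1`; since `|dU| = p`, the
sum of the coefficients of `x` over such a coset vanishes. The sums over the cosets `±U` are
read off from the two characters `χ₀` (trivial) and `χ₁` (upper left entry). So a central `x`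
killed by `χ₀` and `χ₁` has all coset sums zero, hence `x = r (u - 1)` for a generator `u` of `U`,
and `x ^ p = r ^ p (u - 1) ^ p = 0` by centrality. Thus `(χ₀, χ₁) : Z(F[B]) → F × F` is surjective
with nil kernel, so it matches the primitive idempotents of `Z(F[B])` with the two of `F × F`;
they are `(1 ± z) / 2` for `z = -I`.
-/

noncomputable section

open Matrix MvPolynomial

/-- `SL₂(𝔽_p)`. -/
abbrev SL2 (p : ℕ) : Type := Matrix.SpecialLinearGroup (Fin 2) (ZMod p)

/-- The subgroup of upper triangular matrices of `SL₂(𝔽_p)`. -/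
def UT (p : ℕ) : Subgroup (SL2 p) where
  carrier := {M | (M : Matrix (Fin 2) (Fin 2) (ZMod p)) 1 0 = 0}
  one_mem' := by simp
  mul_mem' := by
    intro a b ha hb
    simp only [Set.mem_setOf_eq] at *
    simp [Matrix.SpecialLinearGroup.coe_mul, Matrix.mul_apply, Fin.sum_univ_two, ha, hb]
  inv_mem' := by
    intro a ha
    simp only [Set.mem_setOf_eq] at *
    rw [Matrix.SpecialLinearGroup.SL2_inv_expl]
    simp [ha]

variable (p : ℕ) (F : Type) [Field F] [CharP F p]

/-- The canonical embedding `𝔽_p → F` for `F` of characteristic `p`. -/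
def fpCast : ZMod p →+* F := ZMod.castHom dvd_rfl F

/-- The character of `B` sending an upper triangular matrix to `d^a`,
where `d` is its upper-left entry. -/
def chi (a : ℕ) : UT p →* F where
  toFun b := (fpCast p F (((b : SL2 p) : Matrix (Fin 2) (Fin 2) (ZMod p)) 0 0)) ^ a
  map_one' := by simp
  map_mul' := by
    intro b c
    have hc : ((c : SL2 p) : Matrix (Fin 2) (Fin 2) (ZMod p)) 1 0 = 0 := c.2
    have : (((b * c : UT p) : SL2 p) : Matrix (Fin 2) (Fin 2) (ZMod p)) 0 0
        = ((b : SL2 p) : Matrix (Fin 2) (Fin 2) (ZMod p)) 0 0 *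
          ((c : SL2 p) : Matrix (Fin 2) (Fin 2) (ZMod p)) 0 0 := by
      simp [Matrix.SpecialLinearGroup.coe_mul, Matrix.mul_apply, Fin.sum_univ_two, hc]
    show (fpCast p F) ((((b * c : UT p) : SL2 p) : Matrix (Fin 2) (Fin 2) (ZMod p)) 0 0) ^ a = _
    rw [this, _root_.map_mul, mul_pow]

/-- The one-dimensional representation of `B` on `F` given by the character `chi p F a`. -/
def Srep (a : ℕ) : Representation F (UT p) F where
  toFun b := chi p F a b • (1 : F →ₗ[F] F)
  map_one' := by simp
  map_mul' := by
    intro b c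
    ext
    simp [mul_smul, mul_comm]

/-- The module `S_a`: the one-dimensional module over `F[B]` on which an upper
triangular matrix acts as multiplication by `d^a`, `d` being its upper-left entry. -/
def S (a : ℕ) : Type := (Srep p F a).asModule

instance (a : ℕ) : AddCommGroup (S p F a) :=
  inferInstanceAs (AddCommGroup (Srep p F a).asModule)

instance (a : ℕ) : Module (MonoidAlgebra F (UT p)) (S p F a) :=
  inferInstanceAs (Module (MonoidAlgebra F (UT p)) (Srep p F a).asModule)

instance (a : ℕ) : Module F (S p F a) :=
  inferInstanceAs (Module F (Srep p F a).asModule)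

/-- The algebra endomorphism of `F[x,y]` substituting `X i ↦ ∑ j, g i j • X j`,
i.e. `x ↦ αx + βy`, `y ↦ γx + δy` for `g = [[α,β],[γ,δ]]`. -/
def substAux (g : SL2 p) : MvPolynomial (Fin 2) F →ₐ[F] MvPolynomial (Fin 2) F :=
  aeval (fun i => ∑ j, C (fpCast p F ((g : Matrix (Fin 2) (Fin 2) (ZMod p)) i j)) * X j)

lemma substAux_mem (g : SL2 p) (n : ℕ) {φ : MvPolynomial (Fin 2) F}
    (h : φ ∈ homogeneousSubmodule (Fin 2) F n) :
    substAux p F g φ ∈ homogeneousSubmodule (Fin 2) F n := by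
  rw [mem_homogeneousSubmodule] at h ⊢
  have hg : ∀ i : Fin 2, MvPolynomial.IsHomogeneous
      (∑ j, C (fpCast p F ((g : Matrix (Fin 2) (Fin 2) (ZMod p)) i j)) * X j) 1 := by
    intro i
    apply Finset.sum_induction _ (fun q => MvPolynomial.IsHomogeneous q 1)
    · exact fun a b ha hb => ha.add hb
    · exact isHomogeneous_zero _ _ _
    · intro j _
      simpa using (isHomogeneous_C _ _).mul (isHomogeneous_X _ _)
  have h2 := h.aeval (n := 1) _ hg
  rwa [one_mul] at h2

lemma substAux_comp (g h : SL2 p) :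
    (substAux p F g).comp (substAux p F h) = substAux p F (h * g) := by
  apply MvPolynomial.algHom_ext
  intro i
  simp [substAux, MvPolynomial.aeval_X, Finset.mul_sum, Matrix.SpecialLinearGroup.coe_mul,
    Matrix.mul_apply, Fin.sum_univ_two, map_add, _root_.map_mul, mul_add, add_mul]
  ring

/-- The representation of `G = SL₂(𝔽_p)` on the space of homogeneous polynomials of
degree `n` in `F[x,y]`: the monomial `x^i y^j` is sent by `g = [[α,β],[γ,δ]]` to
`(αx+βy)^i (γx+δy)^j` (as a right action; the corresponding left action is via `g⁻¹`). -/
def Vrep (n : ℕ) : Representation F (SL2 p) (homogeneousSubmodule (Fin 2) F n) where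
  toFun g := ((substAux p F g⁻¹).toLinearMap).restrict
    (fun φ hφ => substAux_mem p F g⁻¹ n hφ)
  map_one' := by
    have h1 : substAux p F (1 : SL2 p) = AlgHom.id F _ := by
      apply MvPolynomial.algHom_ext
      intro i
      fin_cases i <;>
        simp [substAux, MvPolynomial.aeval_X, Matrix.one_apply, Fin.sum_univ_two]
    apply LinearMap.ext; intro φ
    refine Subtype.ext ?_
    show substAux p F (1 : SL2 p)⁻¹ (φ : MvPolynomial (Fin 2) F) = (φ : MvPolynomial (Fin 2) F)
    rw [inv_one, h1]; rfl
  map_mul' := by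
    intro g h
    apply LinearMap.ext; intro φ
    refine Subtype.ext ?_
    show substAux p F (g * h)⁻¹ (φ : MvPolynomial (Fin 2) F)
        = substAux p F g⁻¹ (substAux p F h⁻¹ (φ : MvPolynomial (Fin 2) F))
    rw [_root_.mul_inv_rev, ← AlgHom.comp_apply, substAux_comp]

/-- The module `V_t`: the space of homogeneous polynomials of degree `t-1` in `F[x,y]`,
as a module over `F[G]` for `G = SL₂(𝔽_p)`. -/
def V (t : ℕ) : Type := (Vrep p F (t - 1)).asModule

instance (t : ℕ) : AddCommGroup (V p F t) :=
  inferInstanceAs (AddCommGroup (Vrep p F (t - 1)).asModule)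

instance (t : ℕ) : Module (MonoidAlgebra F (SL2 p)) (V p F t) :=
  inferInstanceAs (Module (MonoidAlgebra F (SL2 p)) (Vrep p F (t - 1)).asModule)

instance (t : ℕ) : Module F (V p F t) :=
  inferInstanceAs (Module F (Vrep p F (t - 1)).asModule)

/-- The restriction of the `F[G]`-module `V_t` to an `F[B]`-module,
for `B` the subgroup of upper triangular matrices. -/
def VrepB (t : ℕ) : Representation F (UT p) (homogeneousSubmodule (Fin 2) F (t - 1)) :=
  (Vrep p F (t - 1)).comp (UT p).subtype

def VB (t : ℕ) : Type := (VrepB p F t).asModule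

instance (t : ℕ) : AddCommGroup (VB p F t) :=
  inferInstanceAs (AddCommGroup (VrepB p F t).asModule)

instance (t : ℕ) : Module (MonoidAlgebra F (UT p)) (VB p F t) :=
  inferInstanceAs (Module (MonoidAlgebra F (UT p)) (VrepB p F t).asModule)

instance (t : ℕ) : Module F (VB p F t) :=
  inferInstanceAs (Module F (VrepB p F t).asModule)

/-- A module is uniserial if its submodules are totally ordered by inclusion. -/
def IsUniserial (R M : Type*) [Ring R] [AddCommGroup M] [Module R M] : Prop :=
  ∀ A B : Submodule R M, A ≤ B ∨ B ≤ A

/-- A module is indecomposable if it is not the internal direct sum of two nonzero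
submodules. (Nontriviality is imposed separately.) -/
def IsIndecomposable (R M : Type*) [Ring R] [AddCommGroup M] [Module R M] : Prop :=
  ∀ A B : Submodule R M, IsCompl A B → A = ⊥ ∨ B = ⊥

/-- A primitive idempotent of a commutative ring: a nonzero idempotent `e` which cannot
be written as `e = f + g` with `f`, `g` nonzero orthogonal idempotents. -/
def IsPrimitiveIdempotent {A : Type*} [CommRing A] (e : A) : Prop :=
  e ≠ 0 ∧ IsIdempotentElem e ∧
    ∀ f g : A, IsIdempotentElem f → IsIdempotentElem g → f * g = 0 → e = f + g →
      f = 0 ∨ g = 0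


/-- The set of relations defining the balanced tensor product
`F[G] ⊗_{F[B]} S_a` as a quotient of `F[G] ⊗_F S_a`: for `b ∈ B` and `s ∈ S_a`,
the element `(ι b) ⊗ s - 1 ⊗ (b • s)`. -/
def indRelSet (a : ℕ) : Set (TensorProduct F (MonoidAlgebra F (SL2 p)) (S p F a)) :=
  {z | ∃ (b : UT p) (s : S p F a),
    z = (MonoidAlgebra.of F (SL2 p) (b : SL2 p)) ⊗ₜ[F] s -
        (1 : MonoidAlgebra F (SL2 p)) ⊗ₜ[F] ((MonoidAlgebra.of F (UT p) b) • s)}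

/-- The `F[G]`-submodule of relations for the balanced tensor product. -/
def indRel (a : ℕ) : Submodule (MonoidAlgebra F (SL2 p)) (TensorProduct F (MonoidAlgebra F (SL2 p)) (S p F a)) :=
  Submodule.span _ (indRelSet p F a)

/-- The induced module `Ind_B^G(S_a) = F[G] ⊗_{F[B]} S_a`, realised as the quotient of
`F[G] ⊗_F S_a` by the submodule of balancing relations. -/
abbrev Ind (a : ℕ) : Type :=
  TensorProduct F (MonoidAlgebra F (SL2 p)) (S p F a) ⧸ indRel p F a

end

section PrimitiveIdempotent

variable {A B : Type*} [CommRing A] [CommRing B]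

theorem eq_of_isIdempotentElem_of_ker_isNilpotent {φ : A →+* B}
    (hker : ∀ x ∈ RingHom.ker φ, IsNilpotent x) {a b : A} (ha : IsIdempotentElem a)
    (hb : IsIdempotentElem b) (h : φ a = φ b) : a = b :=
  eq_of_isNilpotent_sub_of_isIdempotentElem ha hb (hker _ (by simp [RingHom.mem_ker, h]))

theorem isPrimitiveIdempotent_map_iff {φ : A →+* B} (hφ : Function.Surjective φ)
    (hker : ∀ x ∈ RingHom.ker φ, IsNilpotent x) {e : A} (he : IsIdempotentElem e) :
    IsPrimitiveIdempotent (φ e) ↔ IsPrimitiveIdempotent e := by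
  have hzero {a : A} (ha : IsIdempotentElem a) (h : φ a = 0) : a = 0 :=
    eq_of_isIdempotentElem_of_ker_isNilpotent hker ha .zero (by rw [h, map_zero])
  constructor
  · rintro ⟨hne, -, hprim⟩
    refine ⟨fun h => hne (by rw [h, map_zero]), he, fun f g hf hg hfg hsum => ?_⟩
    refine (hprim (φ f) (φ g) (hf.map φ) (hg.map φ) ?_ ?_).imp (hzero hf) (hzero hg)
    · rw [← map_mul, hfg, map_zero]
    · rw [hsum, map_add]
  · rintro ⟨hne, -, hprim⟩
    refine ⟨fun h => hne (hzero he h), he.map φ, fun f' g' hf' hg' hfg' hsum' => ?_⟩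
    obtain ⟨f, hf, rfl⟩ := exists_isIdempotentElem_eq_of_ker_isNilpotent φ hker f' (hφ f') hf'
    obtain ⟨g, hg, rfl⟩ := exists_isIdempotentElem_eq_of_ker_isNilpotent φ hker g' (hφ g') hg'
    have hfg : f * g = 0 := hzero (hf.mul hg) (by rw [map_mul, hfg'])
    have hsum : e = f + g := eq_of_isIdempotentElem_of_ker_isNilpotent hker he
      (hf.add hg (by rw [mul_comm g, hfg, add_zero])) (by rw [hsum', map_add])
    exact (hprim f g hf hg hfg hsum).imp (fun h => by rw [h, map_zero])
      (fun h => by rw [h, map_zero])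

variable [IsDomain A] [IsDomain B]

theorem Prod.isIdempotentElem_iff_eq_zero_or_one {x : A × B} :
    IsIdempotentElem x ↔ (x.1 = 0 ∨ x.1 = 1) ∧ (x.2 = 0 ∨ x.2 = 1) := by
  simp only [← IsIdempotentElem.iff_eq_zero_or_one, IsIdempotentElem, Prod.ext_iff,
    Prod.fst_mul, Prod.snd_mul]

theorem Prod.isPrimitiveIdempotent_iff (x : A × B) :
    IsPrimitiveIdempotent x ↔ x = (1, 0) ∨ x = (0, 1) := by
  constructor
  · rintro ⟨hne, hx, hprim⟩
    obtain ⟨ha | ha, hb | hb⟩ := Prod.isIdempotentElem_iff_eq_zero_or_one.1 hx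
    · exact absurd (Prod.ext ha hb) hne
    · exact Or.inr (Prod.ext ha hb)
    · exact Or.inl (Prod.ext ha hb)
    · have := hprim (1, 0) (0, 1) (by simp [IsIdempotentElem]) (by simp [IsIdempotentElem])
        (by simp) (Prod.ext (by simp [ha]) (by simp [hb]))
      simp at this
  · rintro (rfl | rfl) <;>
      refine ⟨by simp, by simp [IsIdempotentElem], fun f g hf hg hfg hsum => ?_⟩ <;>
      obtain ⟨hf1 | hf1, hf2 | hf2⟩ := Prod.isIdempotentElem_iff_eq_zero_or_one.1 hf <;>
      obtain ⟨hg1 | hg1, hg2 | hg2⟩ := Prod.isIdempotentElem_iff_eq_zero_or_one.1 hg <;>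
      simp_all [Prod.ext_iff]

end PrimitiveIdempotent

theorem exists_sum_mul_pow_eq_mul_sub_one {R ι : Type*} [Ring R] (u : R) (s : Finset ι)
    (c : ι → R) (n : ι → ℕ) (hc : ∑ i ∈ s, c i = 0) :
    ∃ r, ∑ i ∈ s, c i * u ^ n i = r * (u - 1) :=
  ⟨∑ i ∈ s, c i * ∑ j ∈ Finset.range (n i), u ^ j, by
    simp_rw [Finset.sum_mul, mul_assoc, geom_sum_mul, mul_sub, mul_one, Finset.sum_sub_distrib,
      hc, sub_zero]⟩

theorem pow_eq_pow_mul_pow_of_mem_center {M : Type*} [Monoid M] {x r y : M}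
    (hx : x ∈ Set.center M) (h : x = r * y) (n : ℕ) : x ^ n = r ^ n * y ^ n := by
  induction n with
  | zero => simp
  | succ n ih =>
    calc x ^ (n + 1) = r ^ n * (y ^ n * x) := by rw [pow_succ, ih, mul_assoc]
      _ = r ^ n * (r * y * y ^ n) := by rw [Semigroup.mem_center_iff.1 hx, h]
      _ = r ^ (n + 1) * y ^ (n + 1) := by rw [pow_succ r, pow_succ' y]; simp only [mul_assoc]

theorem MonoidAlgebra.of_sub_one_pow_char_eq_zero {k G : Type*} [CommRing k] [Monoid G]
    (p : ℕ) [Fact p.Prime] [CharP k p] {g : G} (hg : g ^ p = 1) :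
    (MonoidAlgebra.of k G g - 1) ^ p = 0 := by
  have : CharP (MonoidAlgebra k G) p := charP_of_injective_algebraMap' k p
  rw [sub_pow_char_of_commute p (Commute.one_right _), ← map_pow, hg, map_one, one_pow, sub_self]

theorem MonoidAlgebra.coeff_conj_of_mem_center {k G : Type*} [CommSemiring k] [Group G]
    {x : MonoidAlgebra k G} (hx : x ∈ Set.center (MonoidAlgebra k G)) (g h : G) :
    x.coeff (h * g * h⁻¹) = x.coeff g := by
  have hc := congrArg (fun z : MonoidAlgebra k G => z.coeff (h * g))
    (Semigroup.mem_center_iff.1 hx (MonoidAlgebra.single h 1))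
  simp only [MonoidAlgebra.coeff_single_mul_apply, MonoidAlgebra.coeff_mul_single_apply, one_mul,
    mul_one, inv_mul_cancel_left] at hc
  simpa [mul_assoc] using hc.symm

theorem MonoidAlgebra.of_mem_center {k G : Type*} [CommSemiring k] [Group G] {g : G}
    (hg : g ∈ Set.center G) : of k G g ∈ Set.center (MonoidAlgebra k G) := by
  refine Semigroup.mem_center_iff.2 fun y => ?_
  ext a
  rw [of_apply, coeff_mul_single_apply, coeff_single_mul_apply, one_mul, mul_one,
    Semigroup.mem_center_iff.1 (Set.inv_mem_center hg) a]

namespace UT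

variable {p : ℕ}

abbrev mat (g : UT p) : Matrix (Fin 2) (Fin 2) (ZMod p) :=
  ((g : SL2 p) : Matrix (Fin 2) (Fin 2) (ZMod p))

theorem mat_injective : Function.Injective (mat (p := p)) :=
  fun _ _ h => Subtype.ext (Subtype.ext h)

@[simp] theorem mat_mul (g h : UT p) : mat (g * h) = mat g * mat h := rfl

@[simp] theorem mat_one : mat (1 : UT p) = 1 := rfl

theorem mat_one_zero (g : UT p) : mat g 1 0 = 0 := g.2

theorem mat_zero_zero_mul_one_one (g : UT p) : mat g 0 0 * mat g 1 1 = 1 := by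
  have h : (mat g).det = 1 := (g : SL2 p).2
  rwa [Matrix.det_fin_two, mat_one_zero g, mul_zero, sub_zero] at h

def unipotent (t : ZMod p) : UT p :=
  ⟨⟨!![1, t; 0, 1], by simp [Matrix.det_fin_two]⟩, show (_ : Matrix _ _ _) 1 0 = 0 by simp⟩

def diagonal (d : (ZMod p)ˣ) : UT p :=
  ⟨⟨!![(d : ZMod p), 0; 0, ((d⁻¹ : (ZMod p)ˣ) : ZMod p)], by simp [Matrix.det_fin_two]⟩,
    show (_ : Matrix _ _ _) 1 0 = 0 by simp⟩

@[simp] theorem mat_unipotent (t : ZMod p) : mat (unipotent t) = !![1, t; 0, 1] := rfl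

@[simp] theorem mat_diagonal (d : (ZMod p)ˣ) :
    mat (diagonal d) = !![(d : ZMod p), 0; 0, ((d⁻¹ : (ZMod p)ˣ) : ZMod p)] := rfl

theorem unipotent_add (a b : ZMod p) : unipotent (a + b) = unipotent a * unipotent b :=
  mat_injective (by simp [add_comm])

theorem unipotent_zero : unipotent (0 : ZMod p) = 1 :=
  mat_injective (by simp [Matrix.one_fin_two])

theorem unipotent_one_pow (n : ℕ) : unipotent (1 : ZMod p) ^ n = unipotent (n : ZMod p) := by
  induction n with
  | zero => simp [unipotent_zero]
  | succ n ih => rw [pow_succ, ih, ← unipotent_add, Nat.cast_succ]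

theorem diagonal_mul (a b : (ZMod p)ˣ) : diagonal (a * b) = diagonal a * diagonal b :=
  mat_injective (by simp [mul_comm])

theorem diagonal_one : diagonal (1 : (ZMod p)ˣ) = 1 :=
  mat_injective (by simp [Matrix.one_fin_two])

theorem unipotent_mul_diagonal_mul_inv (t : ZMod p) (d : (ZMod p)ˣ) :
    unipotent t * diagonal d * (unipotent t)⁻¹ =
      diagonal d * unipotent (t * (((d⁻¹ * d⁻¹ : (ZMod p)ˣ) : ZMod p) - 1)) := by
  rw [mul_inv_eq_iff_eq_mul, mul_assoc, ← unipotent_add]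
  refine mat_injective ?_
  ext i j
  fin_cases i <;> fin_cases j <;> simp
  linear_combination (-(t * ((d⁻¹ : (ZMod p)ˣ) : ZMod p))) * d.mul_inv

theorem mat_diagonal_neg_one : mat (diagonal (-1 : (ZMod p)ˣ)) = -1 := by
  simp [Matrix.one_fin_two]

theorem diagonal_neg_one_mem_center : diagonal (-1 : (ZMod p)ˣ) ∈ Set.center (UT p) :=
  Semigroup.mem_center_iff.2 fun g => mat_injective (by
    simp only [mat_mul, mat_diagonal_neg_one, Matrix.mul_neg, Matrix.neg_mul, mul_one, one_mul])

def diagonalUnipotentEquiv : (ZMod p)ˣ × ZMod p ≃ UT p where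
  toFun x := diagonal x.1 * unipotent x.2
  invFun g := (⟨mat g 0 0, mat g 1 1, mat_zero_zero_mul_one_one g,
      by rw [mul_comm]; exact mat_zero_zero_mul_one_one g⟩, mat g 0 1 * mat g 1 1)
  left_inv := by
    rintro ⟨d, k⟩
    ext <;> simp [mul_comm (d : ZMod p), mul_assoc]
  right_inv g := by
    refine mat_injective ?_
    have h := mat_zero_zero_mul_one_one g
    ext i j
    fin_cases i <;> fin_cases j <;> simp [mat_one_zero g]
    linear_combination mat g 0 1 * h

open MonoidAlgebra Finset

instance [NeZero p] : Fintype (UT p) := Fintype.ofEquiv _ diagonalUnipotentEquiv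

section FiberSum

variable [NeZero p] {R : Type*} [CommRing R]

def fiberSum (x : MonoidAlgebra R (UT p)) (d : (ZMod p)ˣ) : R :=
  ∑ k, x.coeff (diagonal d * unipotent k)

theorem exists_eq_mul_of_unipotent_sub_one {x : MonoidAlgebra R (UT p)}
    (hS : ∀ d, fiberSum x d = 0) :
    ∃ r, x = r * (of R (UT p) (unipotent 1) - 1) := by
  have hx : x = ∑ i : (ZMod p)ˣ × ZMod p,
      x.coeff (diagonalUnipotentEquiv i) • of R (UT p) (diagonal i.1) *
        of R (UT p) (unipotent 1) ^ i.2.val := by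
    conv_lhs => rw [← sum_coeff_single x]
    rw [Finsupp.sum_fintype _ _ (by simp), ← diagonalUnipotentEquiv.sum_comp]
    refine sum_congr rfl fun i _ => ?_
    rw [smul_mul_assoc, ← map_pow, unipotent_one_pow, ZMod.natCast_zmod_val, ← map_mul,
      of_apply, smul_single', mul_one]
    rfl
  rw [hx]
  refine exists_sum_mul_pow_eq_mul_sub_one _ _ _ _ ?_
  simp_rw [Fintype.sum_prod_type, ← sum_smul]
  refine sum_eq_zero fun d _ => ?_
  rw [← zero_smul R (of R (UT p) (diagonal d)), ← hS d]
  rfl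

end FiberSum

section CentralIdempotent

variable {F : Type} [Field F]

variable (p F) in
noncomputable def centralIdempotent : Subring.center (MonoidAlgebra F (UT p)) :=
  ⟨(2 : F)⁻¹ • (1 + of F (UT p) (diagonal (-1))), by
    rw [Algebra.smul_def]
    exact Subring.mul_mem _ (Set.algebraMap_mem_center _)
      (Subring.add_mem _ (Subring.one_mem _) (of_mem_center diagonal_neg_one_mem_center))⟩

theorem isIdempotentElem_centralIdempotent (h2 : (2 : F) ≠ 0) :
    IsIdempotentElem (centralIdempotent p F) := by
  set z := of F (UT p) (diagonal (-1))
  have hz : (1 + z) * (1 + z) = (2 : F) • (1 + z) := by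
    rw [add_mul, mul_add, mul_add, one_mul, mul_one, one_mul, ← map_mul, ← diagonal_mul,
      neg_mul_neg, one_mul, diagonal_one, map_one, two_smul]
    abel
  refine Subtype.ext ?_
  change (2 : F)⁻¹ • (1 + z) * ((2 : F)⁻¹ • (1 + z)) = (2 : F)⁻¹ • (1 + z)
  rw [smul_mul_smul_comm, hz, smul_smul, mul_assoc, inv_mul_cancel₀ h2, mul_one]

end CentralIdempotent

variable {F : Type} [Field F] [CharP F p]

theorem chi_diagonal_mul_unipotent (a : ℕ) (d : (ZMod p)ˣ) (k : ZMod p) :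
    chi p F a (diagonal d * unipotent k) = fpCast p F d ^ a := by
  simp [chi]

variable (p F) in
noncomputable def chiAlgHom (a : ℕ) : MonoidAlgebra F (UT p) →ₐ[F] F :=
  lift F F (UT p) (chi p F a)

theorem chiAlgHom_eq_sum_fiberSum [NeZero p] (a : ℕ) (x : MonoidAlgebra F (UT p)) :
    chiAlgHom p F a x = ∑ d : (ZMod p)ˣ, fpCast p F d ^ a * fiberSum x d := by
  rw [chiAlgHom, lift_apply, Finsupp.sum_fintype _ _ (by simp),
    ← diagonalUnipotentEquiv.sum_comp, Fintype.sum_prod_type]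
  refine sum_congr rfl fun d _ => ?_
  rw [fiberSum, mul_sum]
  refine sum_congr rfl fun k _ => ?_
  rw [smul_eq_mul, mul_comm, ← chi_diagonal_mul_unipotent a d k]
  rfl

theorem chiAlgHom_centralIdempotent (a : ℕ) :
    chiAlgHom p F a (centralIdempotent p F) = (2 : F)⁻¹ * (1 + (-1) ^ a) := by
  simp [centralIdempotent, chiAlgHom, chi, mul_add]

variable (p F) in
noncomputable def chiPair : Subring.center (MonoidAlgebra F (UT p)) →+* F × F :=
  ((chiAlgHom p F 0 : MonoidAlgebra F (UT p) →+* F).prod (chiAlgHom p F 1)).comp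
    (Subring.center _).subtype

theorem chiPair_centralIdempotent (h2 : (2 : F) ≠ 0) :
    chiPair p F (centralIdempotent p F) = (1, 0) := by
  simp [chiPair, chiAlgHom_centralIdempotent, one_add_one_eq_two, h2]

theorem chiPair_surjective (h2 : (2 : F) ≠ 0) : Function.Surjective (chiPair p F) := by
  rintro ⟨a, b⟩
  refine ⟨⟨algebraMap F _ b, Set.algebraMap_mem_center b⟩ +
    ⟨algebraMap F _ (a - b), Set.algebraMap_mem_center _⟩ * centralIdempotent p F, ?_⟩
  rw [map_add, map_mul, chiPair_centralIdempotent h2]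
  simp [chiPair, chiAlgHom]

variable [Fact p.Prime] {x : MonoidAlgebra F (UT p)}

theorem fiberSum_eq_zero_of_mem_center (hx : x ∈ Subring.center (MonoidAlgebra F (UT p)))
    {d : (ZMod p)ˣ} (hd : d * d ≠ 1) : fiberSum x d = 0 := by
  have hd' : ((d⁻¹ * d⁻¹ : (ZMod p)ˣ) : ZMod p) - 1 ≠ 0 := by
    rw [sub_ne_zero, Ne, Units.val_eq_one, ← mul_inv, inv_eq_one]
    exact hd
  have hconst (k : ZMod p) : x.coeff (diagonal d * unipotent k) = x.coeff (diagonal d) := by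
    rw [← coeff_conj_of_mem_center hx (diagonal d) (unipotent (k / _)),
      unipotent_mul_diagonal_mul_inv, div_mul_cancel₀ _ hd']
  rw [fiberSum, sum_congr rfl fun k _ => hconst k, sum_const, card_univ, ZMod.card, nsmul_eq_mul,
    CharP.cast_eq_zero, zero_mul]

theorem fiberSum_eq_zero (h2 : (2 : F) ≠ 0) (hx : x ∈ Subring.center (MonoidAlgebra F (UT p)))
    (h0 : chiAlgHom p F 0 x = 0) (h1 : chiAlgHom p F 1 x = 0) (d : (ZMod p)ˣ) :
    fiberSum x d = 0 := by
  by_cases hd : d * d = 1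
  swap
  · exact fiberSum_eq_zero_of_mem_center hx hd
  -- The weight `1 + d e` vanishes on the other coset `eU` with `e² = 1`, namely `e = -d`.
  have hsum : ∑ e, (1 + fpCast p F ↑(d * e)) * fiberSum x e = 0 := by
    rw [chiAlgHom_eq_sum_fiberSum] at h0 h1
    simp only [pow_zero, one_mul, pow_one] at h0 h1
    simp only [add_mul, one_mul, sum_add_distrib, Units.val_mul, map_mul, mul_assoc, ← mul_sum,
      h0, h1, mul_zero, add_zero]
  rw [sum_eq_single d (fun e _ hne => ?_) (by simp), hd, Units.val_one, map_one,
    one_add_one_eq_two] at hsum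
  · exact (mul_eq_zero.1 hsum).resolve_left h2
  by_cases he : e * e = 1
  · have hde : ((d * e : (ZMod p)ˣ) : ZMod p) = -1 := by
      refine (mul_self_eq_one_iff.1 ?_).resolve_left ?_
      · rw [← Units.val_mul, mul_mul_mul_comm, hd, he, one_mul, Units.val_one]
      · rw [Units.val_eq_one, ← hd]
        exact fun h => hne (mul_left_cancel h)
    rw [hde, map_neg, map_one, add_neg_cancel, zero_mul]
  · rw [fiberSum_eq_zero_of_mem_center hx he, mul_zero]

theorem isNilpotent_of_chiAlgHom_eq_zero (h2 : (2 : F) ≠ 0)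
    (hx : x ∈ Subring.center (MonoidAlgebra F (UT p)))
    (h0 : chiAlgHom p F 0 x = 0) (h1 : chiAlgHom p F 1 x = 0) : IsNilpotent x := by
  obtain ⟨r, hr⟩ := exists_eq_mul_of_unipotent_sub_one (fiberSum_eq_zero h2 hx h0 h1)
  refine ⟨p, ?_⟩
  rw [pow_eq_pow_mul_pow_of_mem_center hx hr, of_sub_one_pow_char_eq_zero p, mul_zero]
  rw [unipotent_one_pow, ZMod.natCast_self, unipotent_zero]

theorem isNilpotent_of_mem_ker_chiPair (h2 : (2 : F) ≠ 0) :
    ∀ x ∈ RingHom.ker (chiPair p F), IsNilpotent x := by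
  intro x hx
  simp only [RingHom.mem_ker, chiPair, Prod.ext_iff] at hx
  refine (IsNilpotent.map_iff (Subring.subtype_injective _)).1 ?_
  exact isNilpotent_of_chiAlgHom_eq_zero h2 x.2 hx.1 hx.2

end UT

open UT in
theorem stmt3_general (p : ℕ) (hp : p.Prime) (hodd : Odd p)
    (F : Type) [Field F] [CharP F p] :
    ∃ e₁ e₂ : Subring.center (MonoidAlgebra F (UT p)), e₁ ≠ e₂ ∧
      IsPrimitiveIdempotent e₁ ∧ IsPrimitiveIdempotent e₂ ∧
      ∀ e : Subring.center (MonoidAlgebra F (UT p)),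
        IsPrimitiveIdempotent e → e = e₁ ∨ e = e₂ := by
  have : Fact p.Prime := ⟨hp⟩
  have h2 : (2 : F) ≠ 0 := Ring.two_ne_zero <| by
    rw [ringChar.eq F p]
    rintro rfl
    exact Nat.not_odd_iff_even.2 even_two hodd
  have hker := isNilpotent_of_mem_ker_chiPair (p := p) h2
  have hprim {x} (hx : IsIdempotentElem x) :=
    isPrimitiveIdempotent_map_iff (chiPair_surjective h2) hker hx
  set e := centralIdempotent p F
  have he : IsIdempotentElem e := isIdempotentElem_centralIdempotent h2
  have hφe : chiPair p F e = (1, 0) := chiPair_centralIdempotent h2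
  have hφe' : chiPair p F (1 - e) = (0, 1) := by
    rw [map_sub, map_one, hφe]
    exact Prod.ext (sub_self _) (sub_zero _)
  refine ⟨e, 1 - e, fun h => ?_, ?_, ?_, fun x hx => ?_⟩
  · have := congrArg Prod.fst (hφe.symm.trans ((congrArg (chiPair p F) h).trans hφe'))
    exact one_ne_zero this
  · exact (hprim he).1 ((Prod.isPrimitiveIdempotent_iff _).2 (.inl hφe))
  · exact (hprim he.one_sub).1 ((Prod.isPrimitiveIdempotent_iff _).2 (.inr hφe'))
  refine ((Prod.isPrimitiveIdempotent_iff _).1 ((hprim hx.2.1).2 hx)).imp (fun h => ?_)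
    (fun h => ?_)
  · exact eq_of_isIdempotentElem_of_ker_isNilpotent hker hx.2.1 he (h.trans hφe.symm)
  · exact eq_of_isIdempotentElem_of_ker_isNilpotent hker hx.2.1 he.one_sub (h.trans hφe'.symm)

/-- The center of `F[B]` contains exactly two primitive idempotents;
equivalently, `F[B]` has exactly two blocks. -/
theorem stmt3 (p : ℕ) (hp : p.Prime) (hodd : Odd p)
    (F : Type) [Field F] [IsAlgClosed F] [CharP F p] :
    ∃ e₁ e₂ : Subring.center (MonoidAlgebra F (UT p)), e₁ ≠ e₂ ∧
      IsPrimitiveIdempotent e₁ ∧ IsPrimitiveIdempotent e₂ ∧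
      ∀ e : Subring.center (MonoidAlgebra F (UT p)),
        IsPrimitiveIdempotent e → e = e₁ ∨ e = e₂ :=
  stmt3_general p hp hodd F
end

section
/- The induction to G of the trivial one-dimensional F[B]-module decomposes as Ind_B^G(S_0) = F[G] ⊗_{F[B]} S_0 ≅ V_1 ⊕ V_p, the direct sum of the trivial F[G]-module and the Steinberg module. -/
/-!
The vector `(1, y^(p-1))` of `V_1 × V_p` is fixed by `B`, so `1 ⊗ 1 ↦ (1, y^(p-1))` defines an
`F[G]`-map `Ind_B^G(S_0) → V_1 × V_p`. It is onto: summing the translates of `(1, y^(p-1))` by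
the lower unipotent matrices gives `(p, ∑ₜ (t x + y)^(p-1)) = (0, -x^(p-1))`, because `∑ₜ t^k`
vanishes for `k < p - 1` and equals `-1` for `k = p - 1`; and the translates `(s x + y)^(p-1)` of
`x^(p-1)`, `s ∈ 𝔽_p`, span `V_p` since their coefficient matrix is a Vandermonde matrix times the
nonzero binomial coefficients `(p-1).choose k`. Finally `Ind_B^G(S_0)` is spanned by the images
of the `p + 1` cosets `gB`, so its dimension is at most `p + 1 = dim (V_1 × V_p)`.
-/

open MvPolynomial

noncomputable section BinaryForms

variable {R : Type*} [CommRing R]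

def degreeEqEquivFin (n : ℕ) : {d : Fin 2 →₀ ℕ | d.degree = n} ≃ Fin (n + 1) where
  toFun d := ⟨d.1 0, by
    have hd : d.1.degree = n := d.2
    rw [Finsupp.degree_eq_sum, Fin.sum_univ_two] at hd
    omega⟩
  invFun k := ⟨Finsupp.single 0 (k : ℕ) + Finsupp.single 1 (n - k), by
    simp [Finsupp.degree_eq_sum, Fin.sum_univ_two]
    omega⟩
  left_inv d := by
    obtain ⟨d, hd : d.degree = n⟩ := d
    rw [Finsupp.degree_eq_sum, Fin.sum_univ_two] at hd
    ext i
    fin_cases i <;> simp; omega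
  right_inv k := by ext; simp

instance {σ : Type*} [Finite σ] (n : ℕ) : Module.Finite R (homogeneousSubmodule σ R n) :=
  Module.Finite.iff_fg.mpr (homogeneousSubmodule_fg σ R n)

lemma finrank_homogeneousSubmodule_fin_two [Nontrivial R] (n : ℕ) :
    Module.finrank R (homogeneousSubmodule (Fin 2) R n) = n + 1 := by
  rw [(LinearEquiv.ofEq _ _ (homogeneousSubmodule_eq_finsupp_supported _ _ n)).finrank_eq,
    (AddMonoidAlgebra.supportedEquivFinsupp _).finrank_eq,
    (Finsupp.domLCongr (degreeEqEquivFin n)).finrank_eq]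
  simp

lemma C_mul_X_add_X_pow_eq_sum (a : R) (n : ℕ) :
    (C a * X 0 + X 1 : MvPolynomial (Fin 2) R) ^ n = ∑ k ∈ Finset.range (n + 1),
      monomial (Finsupp.single 0 k + Finsupp.single 1 (n - k)) (a ^ k * n.choose k) := by
  rw [add_pow]
  refine Finset.sum_congr rfl fun k _ => ?_
  rw [mul_pow, ← C_pow, X_pow_eq_monomial, X_pow_eq_monomial, C_mul_monomial, monomial_mul,
    ← map_natCast C, mul_comm, C_mul_monomial, mul_one, mul_one, mul_comm]

lemma coeff_C_mul_X_add_X_pow (a : R) {n k : ℕ} (hk : k ≤ n) :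
    coeff (Finsupp.single 0 k + Finsupp.single 1 (n - k))
      ((C a * X 0 + X 1 : MvPolynomial (Fin 2) R) ^ n) = a ^ k * n.choose k := by
  rw [C_mul_X_add_X_pow_eq_sum, coeff_sum,
    Finset.sum_eq_single_of_mem k (Finset.mem_range.mpr (by omega)), coeff_monomial, if_pos rfl]
  intro m _ hm
  rw [coeff_monomial, if_neg]
  intro h
  exact hm (by simpa using congrArg (· 0) h)

lemma linearIndependent_C_mul_X_add_X_pow {K : Type*} [Field K] {n : ℕ}
    {a : Fin (n + 1) → K} (ha : Function.Injective a) (hn : ∀ k ≤ n, (n.choose k : K) ≠ 0) :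
    LinearIndependent K fun i => (C (a i) * X 0 + X 1 : MvPolynomial (Fin 2) K) ^ n := by
  rw [Fintype.linearIndependent_iff]
  intro c hc
  suffices c = 0 from fun i => congrFun this i
  refine Matrix.eq_zero_of_vecMul_eq_zero (Matrix.det_vandermonde_ne_zero_iff.mpr ha)
    (funext fun k => ?_)
  have hk := congrArg (coeff (Finsupp.single 0 (k : ℕ) + Finsupp.single 1 (n - k))) hc
  simp only [coeff_sum, coeff_smul, coeff_zero, smul_eq_mul] at hk
  rw [Finset.sum_congr rfl fun i _ => by
    rw [coeff_C_mul_X_add_X_pow _ (Fin.is_le k), ← mul_assoc], ← Finset.sum_mul] at hk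
  simpa [Matrix.vecMul, dotProduct] using (mul_eq_zero.mp hk).resolve_right (hn k (Fin.is_le k))

lemma FiniteField.sum_pow_card_sub_one (K : Type*) [Field K] [Fintype K] :
    ∑ x : K, x ^ (Fintype.card K - 1) = -1 := by
  classical
  have hq : 1 < Fintype.card K := Fintype.one_lt_card
  rw [← Finset.sum_erase_add _ _ (Finset.mem_univ 0), zero_pow (by omega), add_zero,
    Finset.sum_congr rfl fun x hx =>
      FiniteField.pow_card_sub_one_eq_one x (Finset.ne_of_mem_erase hx),
    Finset.sum_const, Finset.card_erase_of_mem (Finset.mem_univ _), Finset.card_univ,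
    nsmul_one, Nat.cast_sub hq.le, FiniteField.cast_card_eq_zero, Nat.cast_one, zero_sub]

lemma sum_C_mul_X_add_X_pow_card_sub_one {K : Type*} [Field K] [Fintype K] (f : K →+* R) :
    ∑ t : K, (C (f t) * X 0 + X 1 : MvPolynomial (Fin 2) R) ^ (Fintype.card K - 1)
      = -X 0 ^ (Fintype.card K - 1) := by
  set q := Fintype.card K
  have hq : 1 < q := Fintype.one_lt_card
  simp_rw [C_mul_X_add_X_pow_eq_sum]
  rw [Finset.sum_comm]
  simp_rw [← map_sum, ← Finset.sum_mul, ← map_pow, ← map_sum]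
  rw [Finset.sum_eq_single_of_mem (q - 1) (Finset.mem_range.mpr (by omega))]
  · rw [FiniteField.sum_pow_card_sub_one, Nat.sub_self, Nat.choose_self, X_pow_eq_monomial]
    simp
  · intro k hk hne
    rw [FiniteField.sum_pow_lt_card_sub_one K k (by simp at hk; omega)]
    simp

end BinaryForms

lemma Nat.Prime.cast_choose_pred_ne_zero {p : ℕ} (hp : p.Prime) (K : Type*) [Field K] [CharP K p]
    {k : ℕ} (hk : k ≤ p - 1) : ((p - 1).choose k : K) ≠ 0 := by
  rw [Ne, CharP.cast_eq_zero_iff K p]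
  exact fun h =>
    hp.one_lt.ne' ((hp.coprime_choose_of_lt (Nat.sub_lt hp.pos one_pos) hk).eq_one_of_dvd h)

section SL2

variable (p : ℕ)

def lowerUnipotent (t : ZMod p) : SL2 p := ⟨!![1, 0; t, 1], by simp [Matrix.det_fin_two_of]⟩

def weyl : SL2 p := ⟨!![0, 1; -1, 0], by simp [Matrix.det_fin_two_of]⟩

lemma inv_mul_mem_UT_iff (x g : SL2 p) :
    x⁻¹ * g ∈ UT p ↔
      (x : Matrix (Fin 2) (Fin 2) (ZMod p)) 0 0 * (g : Matrix (Fin 2) (Fin 2) (ZMod p)) 1 0 =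
        (x : Matrix (Fin 2) (Fin 2) (ZMod p)) 1 0 * (g : Matrix (Fin 2) (Fin 2) (ZMod p)) 0 0 := by
  change ((x⁻¹ * g : SL2 p) : Matrix (Fin 2) (Fin 2) (ZMod p)) 1 0 = 0 ↔ _
  rw [Matrix.SpecialLinearGroup.coe_mul, Matrix.SpecialLinearGroup.coe_inv,
    Matrix.adjugate_fin_two]
  simp [Matrix.mul_apply, Fin.sum_univ_two]
  constructor <;> intro h <;> linear_combination h

/-- Representatives of `G ⧸ B`: the coset `gB` is determined by the first column of `g` up to
scaling, i.e. by a point of the projective line over `𝔽_p`. -/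
def cosetRep : Option (ZMod p) → SL2 p
  | none => weyl p
  | some t => lowerUnipotent p t

lemma exists_cosetRep_inv_mul_mem [Fact p.Prime] (g : SL2 p) :
    ∃ o, (cosetRep p o)⁻¹ * g ∈ UT p := by
  obtain ⟨M, hM⟩ := g
  by_cases hg : M 0 0 = 0
  · exact ⟨none, (inv_mul_mem_UT_iff p _ _).mpr (by simp [cosetRep, weyl, hg])⟩
  · refine ⟨some (M 1 0 / M 0 0), (inv_mul_mem_UT_iff p _ _).mpr ?_⟩
    simp [cosetRep, lowerUnipotent, div_mul_cancel₀ _ hg]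

end SL2

noncomputable section Actions

variable (p : ℕ) (F : Type) [Field F] [CharP F p]

instance (t : ℕ) : IsScalarTower F (MonoidAlgebra F (SL2 p)) (V p F t) :=
  inferInstanceAs (IsScalarTower F _ (Vrep p F (t - 1)).asModule)

instance (t : ℕ) : Module.Finite F (V p F t) :=
  inferInstanceAs (Module.Finite F (Vrep p F (t - 1)).asModule)

lemma finrank_V (t : ℕ) : Module.finrank F (V p F t) = t - 1 + 1 :=
  ((Vrep p F (t - 1)).asModuleEquiv.finrank_eq).trans (finrank_homogeneousSubmodule_fin_two _)

def V.toPoly (t : ℕ) : V p F t →ₗ[F] MvPolynomial (Fin 2) F :=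
  (homogeneousSubmodule (Fin 2) F (t - 1)).subtype ∘ₗ
    (Vrep p F (t - 1)).asModuleEquiv.toLinearMap

lemma V.toPoly_injective (t : ℕ) : Function.Injective (V.toPoly p F t) :=
  Subtype.val_injective.comp (Vrep p F (t - 1)).asModuleEquiv.injective

lemma V.toPoly_of_smul (t : ℕ) (g : SL2 p) (v : V p F t) :
    V.toPoly p F t (MonoidAlgebra.of F (SL2 p) g • v) =
      substAux p F g⁻¹ (V.toPoly p F t v) := by
  have := Representation.single_smul (Vrep p F (t - 1)) 1 g v
  rw [one_smul] at this
  exact congrArg Subtype.val this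

def V.one : V p F 1 := (Vrep p F 0).asModuleEquiv.symm ⟨1, isHomogeneous_one _ _⟩

def V.xPow (t : ℕ) (i : Fin 2) : V p F t :=
  (Vrep p F (t - 1)).asModuleEquiv.symm ⟨X i ^ (t - 1), isHomogeneous_X_pow _ _⟩

lemma V.toPoly_one : V.toPoly p F 1 (V.one p F) = 1 := rfl

lemma V.toPoly_xPow (t : ℕ) (i : Fin 2) : V.toPoly p F t (V.xPow p F t i) = X i ^ (t - 1) := rfl

lemma V.of_smul_one (g : SL2 p) : MonoidAlgebra.of F (SL2 p) g • V.one p F = V.one p F :=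
  V.toPoly_injective p F 1 (by rw [V.toPoly_of_smul, V.toPoly_one, map_one])

lemma V.exists_eq_smul_one (v : V p F 1) : ∃ c : F, c • V.one p F = v := by
  have hne : V.one p F ≠ 0 := fun h => one_ne_zero (α := MvPolynomial (Fin 2) F) <| by
    simpa [V.toPoly_one] using congrArg (V.toPoly p F 1) h
  exact (finrank_eq_one_iff_of_nonzero' _ hne).mp (finrank_V p F 1) v

lemma V.toPoly_of_inv_smul_xPow (t : ℕ) (g : SL2 p) (i : Fin 2) :
    V.toPoly p F t (MonoidAlgebra.of F (SL2 p) g⁻¹ • V.xPow p F t i)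
      = (C (fpCast p F ((g : Matrix (Fin 2) (Fin 2) (ZMod p)) i 0)) * X 0 +
          C (fpCast p F ((g : Matrix (Fin 2) (Fin 2) (ZMod p)) i 1)) * X 1) ^ (t - 1) := by
  rw [V.toPoly_of_smul, inv_inv, V.toPoly_xPow, map_pow]
  simp [substAux, Fin.sum_univ_two]

end Actions

section Steinberg

variable (p : ℕ) (F : Type) [Field F] [CharP F p] [Fact p.Prime]

lemma V.of_smul_xPow_one_of_mem {b : SL2 p} (hb : b ∈ UT p) :
    MonoidAlgebra.of F (SL2 p) b • V.xPow p F p 1 = V.xPow p F p 1 := by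
  have h10 : ((b⁻¹ : SL2 p) : Matrix (Fin 2) (Fin 2) (ZMod p)) 1 0 = 0 := inv_mem hb
  have h11 : ((b⁻¹ : SL2 p) : Matrix (Fin 2) (Fin 2) (ZMod p)) 1 1 ≠ 0 := by
    intro h
    have hdet := Matrix.SpecialLinearGroup.det_coe b⁻¹
    rw [Matrix.det_fin_two, h10, h] at hdet
    simp at hdet
  apply V.toPoly_injective
  rw [← inv_inv b, V.toPoly_of_inv_smul_xPow, V.toPoly_xPow, h10, map_zero, C_0, zero_mul,
    zero_add, mul_pow, ← C_pow, ← map_pow, ZMod.pow_card_sub_one_eq_one h11, map_one, C_1,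
    one_mul]

lemma V.sum_lowerUnipotent_inv_smul_xPow_one :
    ∑ t : ZMod p, MonoidAlgebra.of F (SL2 p) (lowerUnipotent p t)⁻¹ • V.xPow p F p 1
      = -V.xPow p F p 0 := by
  apply V.toPoly_injective
  simp only [map_sum, map_neg, V.toPoly_of_inv_smul_xPow, V.toPoly_xPow]
  simpa [lowerUnipotent, ZMod.card] using sum_C_mul_X_add_X_pow_card_sub_one (fpCast p F)

lemma V.span_xPow_zero :
    Submodule.span (MonoidAlgebra F (SL2 p)) {V.xPow p F p 0} = ⊤ := by
  have hp := (Fact.out : p.Prime)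
  set w : Fin (p - 1 + 1) → V p F p := fun i =>
    MonoidAlgebra.of F (SL2 p) (weyl p * lowerUnipotent p i)⁻¹ • V.xPow p F p 0
  have hw : LinearIndependent F w := by
    refine LinearIndependent.of_comp (V.toPoly p F p) ?_
    convert linearIndependent_C_mul_X_add_X_pow
      (a := fun i : Fin (p - 1 + 1) => fpCast p F ((i : ℕ) : ZMod p))
      ?_ fun k hk => hp.cast_choose_pred_ne_zero F hk using 1
    · funext i
      rw [Function.comp_apply, V.toPoly_of_inv_smul_xPow, Matrix.SpecialLinearGroup.coe_mul]
      simp [weyl, lowerUnipotent, Matrix.mul_apply, Fin.sum_univ_two]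
    · intro i j hij
      have := i.isLt
      have := j.isLt
      have := hp.pos
      have h := congrArg ZMod.val ((fpCast p F).injective hij)
      rwa [ZMod.val_natCast_of_lt (show (i : ℕ) < p by omega),
        ZMod.val_natCast_of_lt (show (j : ℕ) < p by omega), ← Fin.ext_iff] at h
  have hspan : Submodule.span F (Set.range w) = ⊤ :=
    hw.span_eq_top_of_card_eq_finrank' (by simp [finrank_V])
  refine eq_top_iff.mpr fun v _ => ?_
  have hle : Submodule.span F (Set.range w) ≤
      (Submodule.span (MonoidAlgebra F (SL2 p)) {V.xPow p F p 0}).restrictScalars F := by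
    rw [Submodule.span_le]
    rintro _ ⟨i, rfl⟩
    exact Submodule.smul_mem _ _ (Submodule.mem_span_singleton_self _)
  exact hle (hspan ▸ Submodule.mem_top)

end Steinberg

noncomputable section Induced

open TensorProduct

variable (p : ℕ) (F : Type) [Field F] [CharP F p]

def S.equivScalar (a : ℕ) : S p F a ≃ₗ[F] F := (Srep p F a).asModuleEquiv

lemma S.of_smul_eq_self (b : UT p) (s : S p F 0) : MonoidAlgebra.of F (UT p) b • s = s := by
  refine (Representation.single_smul (Srep p F 0) 1 b s).trans ?_
  simp [Srep, chi]
  rfl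

def Ind.single (g : SL2 p) : Ind p F 0 :=
  Submodule.Quotient.mk (MonoidAlgebra.of F (SL2 p) g ⊗ₜ[F] (S.equivScalar p F 0).symm 1)

lemma Ind.single_mul_of_mem (g : SL2 p) {b : SL2 p} (hb : b ∈ UT p) :
    Ind.single p F (g * b) = Ind.single p F g := by
  have hrel := (indRel p F 0).smul_mem (MonoidAlgebra.of F (SL2 p) g)
    (Submodule.subset_span ⟨⟨b, hb⟩, (S.equivScalar p F 0).symm 1, rfl⟩)
  rw [S.of_smul_eq_self, smul_sub, smul_tmul', smul_tmul', smul_eq_mul, smul_eq_mul, ← map_mul,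
    mul_one] at hrel
  exact (Submodule.Quotient.eq _).mpr hrel

lemma Ind.span_range_single : Submodule.span F (Set.range (Ind.single p F)) = ⊤ := by
  rw [eq_top_iff]
  rintro x -
  obtain ⟨z, rfl⟩ := Submodule.Quotient.mk_surjective _ x
  induction z using TensorProduct.induction_on with
  | zero => exact zero_mem _
  | add x y hx hy => exact add_mem hx hy
  | tmul a s =>
    induction a using MonoidAlgebra.induction_linear with
    | zero => simp
    | add f g hf hg => rw [add_tmul]; exact add_mem hf hg
    | single g c =>
      have hs : s = S.equivScalar p F 0 s • (S.equivScalar p F 0).symm 1 :=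
        (S.equivScalar p F 0).injective (by simp)
      rw [hs, tmul_smul, ← MonoidAlgebra.smul_of, ← smul_tmul', smul_smul,
        Submodule.Quotient.mk_smul]
      exact Submodule.smul_mem _ _ (Submodule.subset_span ⟨g, rfl⟩)

instance [NeZero p] : Module.Finite F (Ind p F 0) :=
  ⟨Ind.span_range_single p F ▸ Submodule.fg_span (Set.finite_range _)⟩

lemma Ind.finrank_le [Fact p.Prime] : Module.finrank F (Ind p F 0) ≤ p + 1 := by
  have hrange : Set.range (Ind.single p F ∘ cosetRep p) = Set.range (Ind.single p F) := by
    refine (Set.range_comp_subset_range _ _).antisymm ?_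
    rintro _ ⟨g, rfl⟩
    obtain ⟨o, ho⟩ := exists_cosetRep_inv_mul_mem p g
    exact ⟨o, by simpa using (Ind.single_mul_of_mem p F (cosetRep p o) ho).symm⟩
  calc Module.finrank F (Ind p F 0)
      = (Set.range (Ind.single p F ∘ cosetRep p)).finrank F := by
        rw [Set.finrank, hrange, Ind.span_range_single, finrank_top]
    _ ≤ Fintype.card (Option (ZMod p)) := finrank_range_le_card _
    _ = p + 1 := by simp [ZMod.card]

variable {p F} {M : Type*} [AddCommGroup M] [Module (MonoidAlgebra F (SL2 p)) M] [Module F M]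
  [IsScalarTower F (MonoidAlgebra F (SL2 p)) M]

def Ind.lift (v : M) (hv : ∀ b ∈ UT p, MonoidAlgebra.of F (SL2 p) b • v = v) :
    Ind p F 0 →ₗ[MonoidAlgebra F (SL2 p)] M :=
  (indRel p F 0).liftQ
    (AlgebraTensorModule.lift (LinearMap.toSpanSingleton _ _
      (LinearMap.toSpanSingleton F M v ∘ₗ (S.equivScalar p F 0).toLinearMap))) (by
    rw [indRel, Submodule.span_le]
    rintro _ ⟨b, s, rfl⟩
    rw [SetLike.mem_coe, LinearMap.mem_ker, map_sub, S.of_smul_eq_self,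
      AlgebraTensorModule.lift_tmul, AlgebraTensorModule.lift_tmul, LinearMap.toSpanSingleton_apply,
      LinearMap.toSpanSingleton_apply, LinearMap.smul_apply, LinearMap.smul_apply, one_smul,
      LinearMap.comp_apply, LinearMap.toSpanSingleton_apply, smul_comm, hv b b.2, sub_self])

lemma Ind.lift_single (v : M) (hv : ∀ b ∈ UT p, MonoidAlgebra.of F (SL2 p) b • v = v)
    (g : SL2 p) : Ind.lift v hv (Ind.single p F g) = MonoidAlgebra.of F (SL2 p) g • v := by
  simp [Ind.lift, Ind.single]

lemma Ind.lift_surjective (v : M) (hv : ∀ b ∈ UT p, MonoidAlgebra.of F (SL2 p) b • v = v)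
    (hspan : Submodule.span (MonoidAlgebra F (SL2 p)) {v} = ⊤) :
    Function.Surjective (Ind.lift v hv) := by
  rw [← LinearMap.range_eq_top, eq_top_iff, ← hspan, Submodule.span_le,
    Set.singleton_subset_iff]
  exact ⟨Ind.single p F 1, by rw [Ind.lift_single, map_one, one_smul]⟩

end Induced

noncomputable section Decomposition

variable (p : ℕ) (F : Type) [Field F] [CharP F p] [Fact p.Prime]

def borelFixed : V p F 1 × V p F p := (V.one p F, V.xPow p F p 1)

lemma of_smul_borelFixed {b : SL2 p} (hb : b ∈ UT p) :
    MonoidAlgebra.of F (SL2 p) b • borelFixed p F = borelFixed p F :=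
  Prod.ext (V.of_smul_one p F b) (V.of_smul_xPow_one_of_mem p F hb)

lemma span_borelFixed :
    Submodule.span (MonoidAlgebra F (SL2 p)) {borelFixed p F} = ⊤ := by
  set T := Submodule.span (MonoidAlgebra F (SL2 p)) {borelFixed p F}
  have hfixed : borelFixed p F ∈ T := Submodule.mem_span_singleton_self _
  set σ := ∑ t : ZMod p, MonoidAlgebra.of F (SL2 p) (lowerUnipotent p t)⁻¹
  have hsum : σ • borelFixed p F = (0, -V.xPow p F p 0) := by
    rw [borelFixed, Prod.smul_mk, Finset.sum_smul, Finset.sum_smul,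
      V.sum_lowerUnipotent_inv_smul_xPow_one]
    simp only [V.of_smul_one, Finset.sum_const, Finset.card_univ, ZMod.card,
      ← Nat.cast_smul_eq_nsmul F, CharP.cast_eq_zero, zero_smul]
  have hinr :
      LinearMap.range (LinearMap.inr (MonoidAlgebra F (SL2 p)) (V p F 1) (V p F p)) ≤ T := by
    rw [LinearMap.range_eq_map, ← V.span_xPow_zero, Submodule.map_span_le]
    rintro _ rfl
    have := T.neg_mem (T.smul_mem σ hfixed)
    rwa [hsum, Prod.neg_mk, neg_zero, neg_neg] at this
  refine eq_top_iff.mpr fun ⟨q, u⟩ _ => ?_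
  obtain ⟨c, rfl⟩ := V.exists_eq_smul_one p F q
  have hdecomp : (c • V.one p F, u) = c • borelFixed p F + (0, u - c • V.xPow p F p 1) := by
    ext <;> simp [borelFixed]
  rw [hdecomp]
  exact T.add_mem (T.smul_of_tower_mem c hfixed) (hinr ⟨_, rfl⟩)

lemma finrank_V_one_prod_V : Module.finrank F (V p F 1 × V p F p) = p + 1 := by
  have := (Fact.out : p.Prime).pos
  rw [Module.finrank_prod, finrank_V, finrank_V]
  omega

end Decomposition

theorem stmt14_general (p : ℕ) (hp : p.Prime)
    (F : Type) [Field F] [CharP F p] :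
    Nonempty (Ind p F 0 ≃ₗ[MonoidAlgebra F (SL2 p)] (V p F 1 × V p F p)) := by
  have : Fact p.Prime := ⟨hp⟩
  set Φ := Ind.lift (borelFixed p F) fun _ hb => of_smul_borelFixed p F hb
  have hsurj : Function.Surjective Φ := Ind.lift_surjective _ _ (span_borelFixed p F)
  refine ⟨.ofBijective Φ (OrzechProperty.bijective_of_surjective_of_finrank_le
    (Φ.restrictScalars F) hsurj ?_)⟩
  rw [finrank_V_one_prod_V]
  exact Ind.finrank_le p F

/-- `Ind_B^G(S_0) ≅ V_1 ⊕ V_p`: the induction of the trivial `F[B]`-module is the direct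
sum of the trivial module and the Steinberg module. -/
theorem stmt14 (p : ℕ) (hp : p.Prime) (hodd : Odd p)
    (F : Type) [Field F] [IsAlgClosed F] [CharP F p] :
    Nonempty (Ind p F 0 ≃ₗ[MonoidAlgebra F (SL2 p)] (V p F 1 × V p F p)) :=
  stmt14_general p hp F
end

section
/- Let p be an odd prime and n = (p-1)/2. Define n×n matrices over ℚ, indexed by {1,...,n}: ℬ with entries ℬ_{ii} = 2 for i < n, ℬ_{nn} = 3, ℬ_{ij} = 1 if |i-j| = 1, and ℬ_{ij} = 0 otherwise; and Γ with entries Γ_{ij} = (-1)^{i+j}·(min(i,j) − 2ij/p). Then ℬ·Γ = I, i.e., Γ is the inverse of ℬ. -/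
/-!
Write `γ i j = (-1)^(i+j) (min(i,j) - 2ij/p)` for all natural `i, j`. For every `i, j` one has
`γ (i-1) j + 2 γ i j + γ (i+1) j = δ i j`: the terms linear in `i` cancel because the signs
alternate, and `2 min(i,j) - min(i-1,j) - min(i+1,j) = δ i j`. Row `i` of `ℬΓ` is exactly this
sum once the rows `0` and `n+1` outside the matrix are read off the formula: `γ 0 j = 0`, and
`γ (n+1) j = γ n j` because `p = 2n+1`, which accounts for the extra `1` in `ℬ n n = 3`.
-/

open Finset Matrix

section FinSum

variable {M : Type*} [AddCommMonoid M]

lemma Fin.sum_univ_ite_val_eq {n : ℕ} (g : ℕ → M) (m : ℕ) :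
    ∑ k : Fin n, (if (k : ℕ) = m then g k else 0) = if m < n then g m else 0 := by
  rw [Fin.sum_univ_eq_sum_range (fun k => if k = m then g k else 0), sum_ite_eq']
  simp only [mem_range]

lemma Fin.sum_univ_ite_val_succ_eq {n : ℕ} (g : ℕ → M) (hg : g 0 = 0) {m : ℕ}
    (hm : m ≤ n) :
    ∑ k : Fin n, (if (k : ℕ) + 1 = m then g (k + 1) else 0) = g m := by
  cases m with
  | zero => simp [hg]
  | succ m =>
    simp only [Nat.add_right_cancel_iff]
    rw [Fin.sum_univ_ite_val_eq (fun k => g (k + 1)), if_pos (by omega)]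

end FinSum

def gammaEntry (p : ℚ) (i j : ℕ) : ℚ :=
  (-1) ^ (i + j) * ((min i j : ℕ) - 2 * i * j / p)

lemma gammaEntry_zero_left (p : ℚ) (j : ℕ) : gammaEntry p 0 j = 0 := by
  simp [gammaEntry]

lemma gammaEntry_succ_eq_of_le {m j : ℕ} (hj : j ≤ m) :
    gammaEntry (2 * m + 1) (m + 1) j = gammaEntry (2 * m + 1) m j := by
  have hp : (2 * m + 1 : ℚ) ≠ 0 := by positivity
  simp only [gammaEntry, min_eq_right hj, min_eq_right (hj.trans m.le_succ), pow_succ,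
    Nat.add_right_comm m 1 j]
  field_simp
  push_cast
  ring

lemma min_add_min_add_ite (i j : ℕ) :
    min i j + min (i + 2) j + (if i + 1 = j then 1 else 0) = 2 * min (i + 1) j := by
  split_ifs <;> omega

lemma gammaEntry_second_difference (p : ℚ) (i j : ℕ) :
    gammaEntry p i j + 2 * gammaEntry p (i + 1) j + gammaEntry p (i + 2) j =
      if i + 1 = j then 1 else 0 := by
  have hmin := congrArg (Nat.cast : ℕ → ℚ) (min_add_min_add_ite i j)
  have hsign : (-1 : ℚ) ^ (i + 1 + j) = -(-1) ^ (i + j) := by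
    rw [Nat.add_right_comm, pow_succ, mul_neg_one]
  simp only [gammaEntry, Nat.add_right_comm i 2 j, pow_add _ (i + j) 2, hsign]
  push_cast at hmin ⊢
  split_ifs with h
  · subst h
    have hsign_diag : (-1 : ℚ) ^ (i + (i + 1)) = -1 := by
      rw [← add_assoc, ← two_mul, pow_succ, pow_mul]
      norm_num
    rw [if_pos rfl] at hmin
    linear_combination (-1 : ℚ) ^ (i + (i + 1)) * hmin - hsign_diag
  · rw [if_neg h] at hmin
    linear_combination (-1 : ℚ) ^ (i + j) * hmin

theorem stmt17_general (p : ℕ) (hodd : Odd p) (n : ℕ) (hn : n = (p - 1) / 2)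
    (B Γ : Matrix (Fin n) (Fin n) ℚ)
    (hB : ∀ i j : Fin n, B i j =
      if i = j then (if (i : ℕ) + 1 = n then 3 else 2)
      else if (i : ℕ) + 1 + 1 = (j : ℕ) + 1 ∨ (j : ℕ) + 1 + 1 = (i : ℕ) + 1 then 1 else 0)
    (hΓ : ∀ i j : Fin n, Γ i j =
      (-1 : ℚ) ^ (((i : ℕ) + 1) + ((j : ℕ) + 1)) *
        (min (((i : ℕ) : ℚ) + 1) (((j : ℕ) : ℚ) + 1) -
          2 * (((i : ℕ) : ℚ) + 1) * (((j : ℕ) : ℚ) + 1) / (p : ℚ))) :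
    B * Γ = 1 := by
  have hp : (p : ℚ) = 2 * n + 1 := by
    obtain ⟨m, rfl⟩ := hodd
    exact_mod_cast (by omega : 2 * m + 1 = 2 * n + 1)
  ext i j
  set γ : ℕ → ℚ := fun k => gammaEntry (2 * n + 1) k (j + 1)
  have hrow : ∀ k : Fin n, B i k * Γ k j =
      (if (k : ℕ) + 1 = i then γ (k + 1) else 0) +
      (if (k : ℕ) = i then (if (i : ℕ) + 1 = n then 3 else 2) * γ (k + 1) else 0) +
      (if (k : ℕ) = i + 1 then γ (k + 1) else 0) := by
    intro k
    rw [hB, hΓ, hp]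
    simp only [γ, gammaEntry, Fin.ext_iff]
    push_cast
    split_ifs <;> first | omega | ring
  have hδ : (1 : Matrix (Fin n) (Fin n) ℚ) i j = γ i + 2 * γ (i + 1) + γ (i + 1 + 1) := by
    simp only [γ, gammaEntry_second_difference, one_apply, Fin.ext_iff, Nat.add_right_cancel_iff]
  rw [mul_apply, sum_congr rfl fun k _ => hrow k, sum_add_distrib, sum_add_distrib,
    Fin.sum_univ_ite_val_succ_eq γ (gammaEntry_zero_left _ _) i.isLt.le,
    Fin.sum_univ_ite_val_eq (fun k => (if (i : ℕ) + 1 = n then 3 else 2) * γ (k + 1)),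
    Fin.sum_univ_ite_val_eq (fun k => γ (k + 1)), if_pos i.isLt, hδ]
  split_ifs with hlast
  · omega
  · rw [hlast]
    simp only [γ, gammaEntry_succ_eq_of_le j.isLt]
    ring
  · ring
  · omega

/-- The matrix `Γ` with `Γ_{ij} = (-1)^{i+j}(min(i,j) − 2ij/p)` is the inverse of the
Cartan matrix `ℬ` (tridiagonal with diagonal `2, ..., 2, 3` and off-diagonal `1`) of each
non-semisimple block of `F[SL₂(𝔽_p)]`, where both are `n×n` matrices, `n = (p-1)/2`,
indexed by `{1, ..., n}`. -/
theorem stmt17 (p : ℕ) (hp : p.Prime) (hodd : Odd p) (n : ℕ) (hn : n = (p - 1) / 2)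
    (B Γ : Matrix (Fin n) (Fin n) ℚ)
    (hB : ∀ i j : Fin n, B i j =
      if i = j then (if (i : ℕ) + 1 = n then 3 else 2)
      else if (i : ℕ) + 1 + 1 = (j : ℕ) + 1 ∨ (j : ℕ) + 1 + 1 = (i : ℕ) + 1 then 1 else 0)
    (hΓ : ∀ i j : Fin n, Γ i j =
      (-1 : ℚ) ^ (((i : ℕ) + 1) + ((j : ℕ) + 1)) *
        (min (((i : ℕ) : ℚ) + 1) (((j : ℕ) : ℚ) + 1) -
          2 * (((i : ℕ) : ℚ) + 1) * (((j : ℕ) : ℚ) + 1) / (p : ℚ))) :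
    B * Γ = 1 :=
  stmt17_general p hodd n hn B Γ hB hΓ
end
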